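/- arXiv:1609.05203 — 4 statements merged into one kernel-verified Lean document; each statement's English description precedes it below -/
import Mathlib

section
/- If T = S + D is invertible (as a bounded operator), then for every i ∈ ℤ one has d_i · ⟨T⁻¹ e_i, e_i⟩ = d_0 · ⟨T⁻¹ e_0, e_0⟩; that is, the quantity d_i ⟨T⁻¹ e_i, e_i⟩ is independent of i. -/
/-!
Write `t_{jk} = ⟨e_j, T⁻¹ e_k⟩`. Reading the `i`-th coordinate of `T⁻¹ T e_i = e_i` gives
`w_i t_{i,i+1} + d_i t_{ii} = 1`, and reading the `(i+1)`-st coordinate of `T T⁻¹ e_{i+1} = e_{i+1}`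
gives `w_i t_{i,i+1} + d_{i+1} t_{i+1,i+1} = 1`. Subtracting, `d_i t_{ii} = d_{i+1} t_{i+1,i+1}`,
so `i ↦ d_i t_{ii}` is `1`-periodic on `ℤ`, hence constant.
-/

theorem HilbertBasis.continuousLinearMap_ext {ι 𝕜 E F : Type*} [RCLike 𝕜]
    [NormedAddCommGroup E] [InnerProductSpace 𝕜 E] [TopologicalSpace F] [AddCommMonoid F]
    [Module 𝕜 F] [T2Space F] (b : HilbertBasis ι 𝕜 E) {f g : E →L[𝕜] F}
    (h : ∀ i, f (b i) = g (b i)) : f = g :=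
  ContinuousLinearMap.ext_on (Submodule.dense_iff_topologicalClosure_eq_top.mpr b.dense_span)
    (by rintro _ ⟨i, rfl⟩; exact h i)

section ShiftPlusDiagonal

variable {𝕜 E : Type*} [RCLike 𝕜] [NormedAddCommGroup E] [InnerProductSpace 𝕜 E]

theorem HilbertBasis.repr_apply_of_diagonal {ι : Type*} (e : HilbertBasis ι 𝕜 E)
    {D : E →L[𝕜] E} {d : ι → 𝕜} (hD : ∀ i, D (e i) = d i • e i) (x : E) (i : ι) :
    e.repr (D x) i = d i * e.repr x i := by
  have hcoord : (innerSL 𝕜 (e i)).comp D = d i • innerSL 𝕜 (e i) :=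
    e.continuousLinearMap_ext fun k => by
      classical
      simp only [ContinuousLinearMap.comp_apply, smul_apply, innerSL_apply_apply,
        hD, inner_smul_right, orthonormal_iff_ite.mp e.orthonormal, smul_eq_mul]
      split_ifs <;> simp_all
  simpa [e.repr_apply_apply] using congr($hcoord x)

theorem HilbertBasis.repr_apply_succ_of_shift (e : HilbertBasis ℤ 𝕜 E)
    {S : E →L[𝕜] E} {w : ℤ → 𝕜} (hS : ∀ i, S (e i) = w i • e (i + 1)) (x : E) (i : ℤ) :
    e.repr (S x) (i + 1) = w i * e.repr x i := by
  have hcoord : (innerSL 𝕜 (e (i + 1))).comp S = w i • innerSL 𝕜 (e i) :=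
    e.continuousLinearMap_ext fun k => by
      simp only [ContinuousLinearMap.comp_apply, smul_apply, innerSL_apply_apply,
        hS, inner_smul_right, orthonormal_iff_ite.mp e.orthonormal, add_left_inj, smul_eq_mul]
      split_ifs <;> simp_all
  simpa [e.repr_apply_apply] using congr($hcoord x)

variable (e : HilbertBasis ℤ 𝕜 E) {S D Tinv : E →L[𝕜] E} {w d : ℤ → 𝕜}
  (hS : ∀ i, S (e i) = w i • e (i + 1)) (hD : ∀ i, D (e i) = d i • e i)
include hS hD

theorem HilbertBasis.repr_of_leftInverse_shift_add_diagonal (hleft : Tinv ∘L (S + D) = 1)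
    (i : ℤ) : w i * e.repr (Tinv (e (i + 1))) i + d i * e.repr (Tinv (e i)) i = 1 := by
  have hcol : w i • Tinv (e (i + 1)) + d i • Tinv (e i) = e i := by
    simpa [hS, hD] using congr($hleft (e i))
  simpa [e.repr_apply_apply, inner_add_right, inner_smul_right, e.orthonormal.1 i]
    using congr(inner 𝕜 (e i) $hcol)

theorem HilbertBasis.repr_of_rightInverse_shift_add_diagonal (hright : (S + D) ∘L Tinv = 1)
    (i : ℤ) :
    w i * e.repr (Tinv (e (i + 1))) i + d (i + 1) * e.repr (Tinv (e (i + 1))) (i + 1) = 1 := by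
  classical
  simpa [e.repr_apply_succ_of_shift hS, e.repr_apply_of_diagonal hD, e.repr_self]
    using congr(e.repr ($hright (e (i + 1))) (i + 1))

theorem HilbertBasis.diagonal_mul_repr_inverse_periodic (hleft : Tinv ∘L (S + D) = 1)
    (hright : (S + D) ∘L Tinv = 1) :
    Function.Periodic (fun i => d i * e.repr (Tinv (e i)) i) 1 := fun i => by
  linear_combination e.repr_of_rightInverse_shift_add_diagonal hS hD hright i -
    e.repr_of_leftInverse_shift_add_diagonal hS hD hleft i

end ShiftPlusDiagonal

theorem diag_coeff_const_of_perturbed_shift_invertible_general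
    {X : Type*} [NormedAddCommGroup X] [InnerProductSpace ℂ X]
    (e : HilbertBasis ℤ ℂ X) (w d : ℤ → ℂ)
    (S D : X →L[ℂ] X)
    (hS : ∀ i : ℤ, S (e i) = w i • e (i + 1))
    (hD : ∀ i : ℤ, D (e i) = d i • e i)
    (Tinv : X →L[ℂ] X)
    (h1 : (S + D) ∘L Tinv = 1) (h2 : Tinv ∘L (S + D) = 1) :
    ∀ i : ℤ, d i * e.repr (Tinv (e i)) i = d 0 * e.repr (Tinv (e 0)) 0 := fun i => by
  simpa using (e.diagonal_mul_repr_inverse_periodic hS hD h2 h1).int_mul_eq i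

/-- If `T = S + D` (weighted shift plus diagonal) is invertible as a bounded operator,
then the quantity `d_i ⟨T⁻¹ e_i, e_i⟩` (the `i`-th diagonal coordinate of `T⁻¹`
multiplied by `d_i`) is independent of `i`. -/
theorem diag_coeff_const_of_perturbed_shift_invertible
    {X : Type*} [NormedAddCommGroup X] [InnerProductSpace ℂ X] [CompleteSpace X]
    (e : HilbertBasis ℤ ℂ X) (w d : ℤ → ℂ)
    (S D : X →L[ℂ] X)
    (hS : ∀ i : ℤ, S (e i) = w i • e (i + 1))
    (hD : ∀ i : ℤ, D (e i) = d i • e i)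
    (Tinv : X →L[ℂ] X)
    (h1 : (S + D) ∘L Tinv = 1) (h2 : Tinv ∘L (S + D) = 1) :
    ∀ i : ℤ, d i * e.repr (Tinv (e i)) i = d 0 * e.repr (Tinv (e 0)) 0 :=
  diag_coeff_const_of_perturbed_shift_invertible_general e w d S D hS hD Tinv h1 h2
end

section
/- Suppose T = S + D is invertible and write a_j^i = ⟨T⁻¹ e_i, e_j⟩. Then for every i ∈ ℤ and every integer k > 0, assuming all weights w_{i-1},…,w_{i-k} are nonzero, one has a_{i-k}^i = (−1)^{k+1} (1 − d_i a_i^i) · ∏_{m=1}^{k-1} d_{i-m} / ∏_{m=1}^{k} w_{i-m} (with the convention ∏_{m=1}^{0} d_{i-m} = 1). -/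
/-!
Applying `T` to `T⁻¹ e_i` and reading off the `j`-th coordinate gives the two-term recurrence
`w_{j-1} a_{j-1}^i + d_j a_j^i = δ_{ij}`. At `j = i` it determines `a_{i-1}^i` from `a_i^i`, and for
`j = i - 1, i - 2, …` it determines each further coordinate from the previous one, since the
weights involved are nonzero.
-/

open Finset

theorem HilbertBasis.repr_apply_of_apply_eq_smul {ι 𝕜 E : Type*} [RCLike 𝕜]
    [NormedAddCommGroup E] [InnerProductSpace 𝕜 E] (b : HilbertBasis ι 𝕜 E) (A : E →L[𝕜] E)
    (c : ι → 𝕜) (σ : ι ≃ ι) (hA : ∀ n, A (b n) = c n • b (σ n)) (x : E) (j : ι) :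
    b.repr (A x) j = c (σ.symm j) * b.repr x (σ.symm j) := by
  have hfun : (innerSL 𝕜 (b j)).comp A = c (σ.symm j) • innerSL 𝕜 (b (σ.symm j)) := by
    refine ContinuousLinearMap.ext_on
      (Submodule.dense_iff_topologicalClosure_eq_top.mpr b.dense_span) ?_
    rintro _ ⟨n, rfl⟩
    by_cases hn : σ n = j
    · subst hn
      simp [hA, b.orthonormal.1]
    · have hn' : σ.symm j ≠ n := fun h => hn (by simp [← h])
      simp [hA, b.orthonormal.2 hn', b.orthonormal.2 (Ne.symm hn)]
  simpa [b.repr_apply_apply] using congr($hfun x)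

theorem HilbertBasis.repr_shift_add_diagonal {𝕜 E : Type*} [RCLike 𝕜] [NormedAddCommGroup E]
    [InnerProductSpace 𝕜 E] (e : HilbertBasis ℤ 𝕜 E) {w d : ℤ → 𝕜} {S D : E →L[𝕜] E}
    (hS : ∀ i, S (e i) = w i • e (i + 1)) (hD : ∀ i, D (e i) = d i • e i) (x : E) (j : ℤ) :
    e.repr ((S + D) x) j = w (j - 1) * e.repr x (j - 1) + d j * e.repr x j := by
  rw [add_apply, map_add, lp.coeFn_add, Pi.add_apply,
    e.repr_apply_of_apply_eq_smul S w (Equiv.addRight 1) hS,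
    e.repr_apply_of_apply_eq_smul D d (Equiv.refl ℤ) hD]
  simp [sub_eq_add_neg]

theorem apply_sub_eq_of_two_term_recurrence {K : Type*} [Field K] {a w d : ℤ → K} {i : ℤ}
    (hrec : ∀ j, w (j - 1) * a (j - 1) + d j * a j = if j = i then 1 else 0) (n : ℕ)
    (hw : ∀ m : ℕ, 1 ≤ m → m ≤ n + 1 → w (i - m) ≠ 0) :
    a (i - (n + 1 : ℕ)) = (-1) ^ n * (1 - d i * a i) * (∏ m ∈ Icc 1 n, d (i - m))
      / ∏ m ∈ Icc 1 (n + 1), w (i - m) := by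
  induction n with
  | zero =>
    have hi : w (i - 1) * a (i - 1) + d i * a i = 1 := by simpa using hrec i
    simp only [zero_add, Nat.cast_one, pow_zero, one_mul, Icc_self, prod_singleton,
      Icc_eq_empty_of_lt zero_lt_one, prod_empty, mul_one]
    rw [eq_div_iff (by simpa using hw 1 le_rfl le_rfl)]
    linear_combination hi
  | succ n ih =>
    have hwn : ∏ m ∈ Icc 1 (n + 1), w (i - m) ≠ 0 :=
      prod_ne_zero_iff.mpr fun m hm => hw m (mem_Icc.mp hm).1 (by grind)
    have hwlast : w (i - (n + 2 : ℕ)) ≠ 0 := hw (n + 2) (by omega) le_rfl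
    have hstep : w (i - (n + 2 : ℕ)) * a (i - (n + 2 : ℕ))
        + d (i - (n + 1 : ℕ)) * a (i - (n + 1 : ℕ)) = 0 := by
      have := hrec (i - (n + 1 : ℕ))
      rw [if_neg (by omega)] at this
      convert this using 4 <;> push_cast <;> ring
    rw [ih fun m h1 h2 => hw m h1 (by omega)] at hstep
    rw [prod_Icc_succ_top (by omega : 1 ≤ n + 1), prod_Icc_succ_top (by omega : 1 ≤ n + 1 + 1),
      eq_div_iff (mul_ne_zero hwn hwlast)]
    field_simp at hstep
    linear_combination hstep

theorem perturbed_shift_inverse_lower_coeff_general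
    {X : Type*} [NormedAddCommGroup X] [InnerProductSpace ℂ X]
    (e : HilbertBasis ℤ ℂ X) (w d : ℤ → ℂ)
    (S D : X →L[ℂ] X)
    (hS : ∀ i : ℤ, S (e i) = w i • e (i + 1))
    (hD : ∀ i : ℤ, D (e i) = d i • e i)
    (Tinv : X →L[ℂ] X)
    (h1 : (S + D) ∘L Tinv = 1)
    (i : ℤ) (k : ℕ) (hk : 0 < k)
    (hw : ∀ m : ℕ, 1 ≤ m → m ≤ k → w (i - m) ≠ 0) :
    e.repr (Tinv (e i)) (i - k)
      = (-1 : ℂ) ^ (k + 1) * (1 - d i * e.repr (Tinv (e i)) i)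
          * (∏ m ∈ Finset.Icc 1 (k - 1), d (i - m))
          / (∏ m ∈ Finset.Icc 1 k, w (i - m)) := by
  classical
  have hrec (j : ℤ) : w (j - 1) * e.repr (Tinv (e i)) (j - 1) + d j * e.repr (Tinv (e i)) j
      = if j = i then 1 else 0 := by
    rw [← e.repr_shift_add_diagonal hS hD, ← ContinuousLinearMap.comp_apply, h1,
      one_apply_eq_self, e.repr_self, lp.single_apply, Pi.single_apply]
  obtain ⟨n, rfl⟩ : ∃ n, k = n + 1 := ⟨k - 1, by omega⟩
  rw [apply_sub_eq_of_two_term_recurrence hrec n hw, Nat.add_sub_cancel]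
  ring

/-- Let `T = S + D` be invertible with inverse `Tinv`, and write `a_j^i = ⟨T⁻¹ e_i, e_j⟩`
(the `j`-th coordinate of `T⁻¹ e_i`). For `i ∈ ℤ` and `k > 0`, if the weights
`w_{i-1}, …, w_{i-k}` are nonzero, then
`a_{i-k}^i = (-1)^{k+1} (1 - d_i a_i^i) ∏_{m=1}^{k-1} d_{i-m} / ∏_{m=1}^{k} w_{i-m}`. -/
theorem perturbed_shift_inverse_lower_coeff
    {X : Type*} [NormedAddCommGroup X] [InnerProductSpace ℂ X] [CompleteSpace X]
    (e : HilbertBasis ℤ ℂ X) (w d : ℤ → ℂ)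
    (S D : X →L[ℂ] X)
    (hS : ∀ i : ℤ, S (e i) = w i • e (i + 1))
    (hD : ∀ i : ℤ, D (e i) = d i • e i)
    (Tinv : X →L[ℂ] X)
    (h1 : (S + D) ∘L Tinv = 1) (h2 : Tinv ∘L (S + D) = 1)
    (i : ℤ) (k : ℕ) (hk : 0 < k)
    (hw : ∀ m : ℕ, 1 ≤ m → m ≤ k → w (i - m) ≠ 0) :
    e.repr (Tinv (e i)) (i - k)
      = (-1 : ℂ) ^ (k + 1) * (1 - d i * e.repr (Tinv (e i)) i)
          * (∏ m ∈ Finset.Icc 1 (k - 1), d (i - m))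
          / (∏ m ∈ Finset.Icc 1 k, w (i - m)) :=
  perturbed_shift_inverse_lower_coeff_general e w d S D hS hD Tinv h1 i k hk hw
end

section
/- If T = S + D is invertible (as a bounded operator) and all w_i and d_i are nonzero, then at least one of the following two inequalities holds: R⁺ = limsup_{k→∞} [sup_{i∈ℤ} |∏_{m=0}^{k-1} w_{i+m} / ∏_{m=0}^{k} d_{i+m}|]^{1/k} ≤ 1, or R⁻ = limsup_{k→∞} [sup_{i∈ℤ} |∏_{m=1}^{k-1} d_{i-m} / ∏_{m=1}^{k} w_{i-m}|]^{1/k} ≤ 1. -/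
/-!
Let `α j i = ⟪e j, T⁻¹ e i⟫` be the matrix of `T⁻¹`. Comparing the `(i + 1, i)` entries of
`T T⁻¹ = 1` and `T⁻¹ T = 1` shows that `t = d i α i i` does not depend on `i`. Reading `T T⁻¹ = 1` down and up the `i`-th column of `α` then gives
`(∏_{m<k} w (i+m)) t = ± (∏_{m≤k} d (i+m)) α (i+k) i` and
`(∏_{m=1}^{k-1} d (i-m)) (1 - t) = ± (∏_{m=1}^{k} w (i-m)) α (i-k) i`.
All `|α j i|` are at most `‖T⁻¹‖`, and `|t| ≥ 1/2` or `|1 - t| ≥ 1/2`, so one of the two families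
of ratios is bounded by `2 ‖T⁻¹‖`; the `k`-th roots of a bounded sequence have limsup at most 1.
-/

open Finset Filter ENNReal Topology
open scoped InnerProductSpace

lemma limsup_rpow_one_div_le_one {f : ℕ → ℝ≥0∞} {C : ℝ}
    (hf : ∀ᶠ k in atTop, f k ≤ ENNReal.ofReal C) :
    limsup (fun k : ℕ => f k ^ (1 / (k : ℝ))) atTop ≤ 1 := by
  set C' := max C 1
  have hC' : 0 < C' := one_pos.trans_le (le_max_right _ _)
  have hlim : Tendsto (fun k : ℕ => ENNReal.ofReal (C' ^ (1 / (k : ℝ)))) atTop (𝓝 1) := by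
    simpa using ENNReal.tendsto_ofReal
      ((Real.continuousAt_const_rpow hC'.ne').tendsto.comp tendsto_one_div_atTop_nhds_zero_nat)
  calc limsup (fun k : ℕ => f k ^ (1 / (k : ℝ))) atTop
      ≤ limsup (fun k : ℕ => ENNReal.ofReal (C' ^ (1 / (k : ℝ)))) atTop := by
        refine limsup_le_limsup ?_
        filter_upwards [hf] with k hk
        rw [← ENNReal.ofReal_rpow_of_pos hC']
        exact ENNReal.rpow_le_rpow (hk.trans (ENNReal.ofReal_le_ofReal (le_max_left _ _)))
          (by positivity)
    _ = 1 := hlim.limsup_eq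

lemma limsup_iSup_nnnorm_rpow_le_one {ι E : Type*} [SeminormedAddGroup E] {g : ℕ → ι → E}
    {C : ℝ} (hg : ∀ᶠ k in atTop, ∀ i, ‖g k i‖ ≤ C) :
    limsup (fun k : ℕ => (⨆ i, (‖g k i‖₊ : ℝ≥0∞)) ^ (1 / (k : ℝ))) atTop ≤ 1 :=
  limsup_rpow_one_div_le_one <| hg.mono fun k hk =>
    iSup_le fun i => (ofReal_norm (g k i)).symm.trans_le (ENNReal.ofReal_le_ofReal (hk i))

lemma norm_div_mul_norm_le_of_mul_eq {𝕜 : Type*} [NormedField 𝕜] {a b c t : 𝕜}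
    (h : a * t = b * c) : ‖a / b‖ * ‖t‖ ≤ ‖c‖ := by
  rcases eq_or_ne b 0 with rfl | hb
  · simp
  · rw [← norm_mul, div_mul_eq_mul_div, h, mul_div_cancel_left₀ _ hb]

/-- The matrix `α` is a two-sided inverse of the matrix with entries `w i` at `(i + 1, i)`,
`d i` at `(i, i)` and `0` elsewhere. -/
structure IsBidiagonalInverse {R : Type*} [CommRing R] (w d : ℤ → R) (α : ℤ → ℤ → R) : Prop where
  bidiag_mul : ∀ j i, w j * α j i + d (j + 1) * α (j + 1) i = if j + 1 = i then 1 else 0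
  mul_bidiag : ∀ j i, w i * α j (i + 1) + d i * α j i = if j = i then 1 else 0

namespace IsBidiagonalInverse

section CommRing

variable {R : Type*} [CommRing R] {w d : ℤ → R} {α : ℤ → ℤ → R}

theorem prod_mul_diag_eq (h : IsBidiagonalInverse w d α) (k : ℕ) (i : ℤ) :
    (∏ m ∈ range k, w (i + m)) * (d i * α i i)
      = (∏ m ∈ range (k + 1), d (i + m)) * ((-1) ^ k * α (i + k) i) := by
  induction k with
  | zero => simp
  | succ k ih =>
    have hTα := h.bidiag_mul (i + k) i
    rw [if_neg (by omega)] at hTα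
    rw [prod_range_succ, prod_range_succ _ (k + 1)]
    push_cast
    rw [← add_assoc]
    linear_combination w (i + k) * ih
      + (∏ m ∈ range (k + 1), d (i + m)) * (-1) ^ k * hTα

theorem prod_mul_one_sub_diag_eq (h : IsBidiagonalInverse w d α) (n : ℕ) (i : ℤ) :
    (∏ m ∈ Icc 1 n, d (i - m)) * (1 - d i * α i i)
      = (∏ m ∈ Icc 1 (n + 1), w (i - m)) * ((-1) ^ n * α (i - (n + 1 : ℕ)) i) := by
  induction n with
  | zero =>
    have hTα := h.bidiag_mul (i - 1) i
    simp only [sub_add_cancel, if_pos] at hTα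
    simp only [Order.lt_one_iff, Icc_eq_empty_of_lt, prod_empty, one_mul, zero_add, Icc_self,
      prod_singleton, Nat.cast_one, pow_zero]
    linear_combination -hTα
  | succ n ih =>
    have hTα := h.bidiag_mul (i - (n + 1 + 1 : ℕ)) i
    rw [if_neg (by omega)] at hTα
    rw [prod_Icc_succ_top (by omega), prod_Icc_succ_top (by omega)]
    push_cast at hTα ih ⊢
    rw [show i - (n + 1 + 1) + 1 = i - (n + 1) by ring] at hTα
    linear_combination d (i - (n + 1)) * ih
      + (∏ m ∈ Icc 1 (n + 1), w (i - m)) * (-1) ^ n * hTα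

theorem diag_mul_succ [IsDomain R] (h : IsBidiagonalInverse w d α) (hw : ∀ i, w i ≠ 0) (i : ℤ) :
    d (i + 1) * α (i + 1) (i + 1) = d i * α i i := by
  have hTα := h.bidiag_mul i i
  have hαT := h.mul_bidiag (i + 1) i
  rw [if_neg (by omega)] at hTα hαT
  exact mul_left_cancel₀ (hw i) (by linear_combination d (i + 1) * hαT - d i * hTα)

theorem diag_mul_eq [IsDomain R] (h : IsBidiagonalInverse w d α) (hw : ∀ i, w i ≠ 0) (i : ℤ) :
    d i * α i i = d 0 * α 0 0 := by
  simpa using Function.Periodic.int_mul_eq (f := fun i => d i * α i i) (h.diag_mul_succ hw) i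

end CommRing

variable {𝕜 : Type*} [NormedField 𝕜] {w d : ℤ → 𝕜} {α : ℤ → ℤ → 𝕜} {M : ℝ}

theorem limsup_forward_le_one (h : IsBidiagonalInverse w d α) (hw : ∀ i, w i ≠ 0)
    (hM : ∀ j i, ‖α j i‖ ≤ M) (ht : 1 / 2 ≤ ‖d 0 * α 0 0‖) :
    limsup (fun k : ℕ =>
        (⨆ i : ℤ, (‖(∏ m ∈ range k, w (i + m)) / (∏ m ∈ range (k + 1), d (i + m))‖₊ : ℝ≥0∞))
          ^ (1 / (k : ℝ))) atTop ≤ 1 := by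
  refine limsup_iSup_nnnorm_rpow_le_one (C := 2 * M) (.of_forall fun k i => ?_)
  have key := norm_div_mul_norm_le_of_mul_eq (h.prod_mul_diag_eq k i)
  rw [h.diag_mul_eq hw, norm_mul ((-1 : 𝕜) ^ k), norm_pow, norm_neg, norm_one, one_pow, one_mul]
    at key
  nlinarith [norm_nonneg ((∏ m ∈ range k, w (i + m)) / (∏ m ∈ range (k + 1), d (i + m))),
    hM (i + k) i]

theorem limsup_backward_le_one (h : IsBidiagonalInverse w d α) (hw : ∀ i, w i ≠ 0)
    (hM : ∀ j i, ‖α j i‖ ≤ M) (ht : 1 / 2 ≤ ‖1 - d 0 * α 0 0‖) :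
    limsup (fun k : ℕ =>
        (⨆ i : ℤ, (‖(∏ m ∈ Icc 1 (k - 1), d (i - m)) / (∏ m ∈ Icc 1 k, w (i - m))‖₊ : ℝ≥0∞))
          ^ (1 / (k : ℝ))) atTop ≤ 1 := by
  refine limsup_iSup_nnnorm_rpow_le_one (C := 2 * M) ?_
  filter_upwards [eventually_ne_atTop 0] with k hk i
  obtain ⟨n, rfl⟩ := Nat.exists_eq_add_one_of_ne_zero hk
  have key := norm_div_mul_norm_le_of_mul_eq (h.prod_mul_one_sub_diag_eq n i)
  rw [h.diag_mul_eq hw, norm_mul ((-1 : 𝕜) ^ n), norm_pow, norm_neg, norm_one, one_pow, one_mul]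
    at key
  rw [Nat.add_sub_cancel]
  nlinarith [norm_nonneg ((∏ m ∈ Icc 1 n, d (i - m)) / (∏ m ∈ Icc 1 (n + 1), w (i - m))),
    hM (i - (n + 1 : ℕ)) i]

end IsBidiagonalInverse

section HilbertBasis

variable {ι 𝕜 X : Type*} [RCLike 𝕜] [NormedAddCommGroup X] [InnerProductSpace 𝕜 X]

theorem HilbertBasis.ext_continuousLinearMap {F : Type*} [TopologicalSpace F] [AddCommMonoid F]
    [Module 𝕜 F] [T2Space F] (e : HilbertBasis ι 𝕜 X) {f g : X →L[𝕜] F}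
    (h : ∀ i, f (e i) = g (e i)) : f = g := by
  refine ContinuousLinearMap.ext_on ?_ (s := Set.range e) (by rintro _ ⟨i, rfl⟩; exact h i)
  rw [dense_iff_closure_eq, ← Submodule.topologicalClosure_coe, e.dense_span, Submodule.top_coe]

theorem HilbertBasis.norm_inner_apply_le (e : HilbertBasis ι 𝕜 X) (A : X →L[𝕜] X) (j i : ι) :
    ‖⟪e j, A (e i)⟫_𝕜‖ ≤ ‖A‖ :=
  calc ‖⟪e j, A (e i)⟫_𝕜‖ ≤ ‖e j‖ * ‖A (e i)‖ := norm_inner_le_norm _ _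
    _ ≤ ‖A‖ := by simpa [e.orthonormal.1] using A.le_opNorm (e i)

variable {e : HilbertBasis ℤ 𝕜 X} {w d : ℤ → 𝕜} {T A : X →L[𝕜] X}

theorem inner_basis_succ_apply (hT : ∀ i, T (e i) = w i • e (i + 1) + d i • e i)
    (j : ℤ) (x : X) :
    ⟪e (j + 1), T x⟫_𝕜 = w j * ⟪e j, x⟫_𝕜 + d (j + 1) * ⟪e (j + 1), x⟫_𝕜 := by
  have : (innerSL 𝕜 (e (j + 1))).comp T
      = w j • innerSL 𝕜 (e j) + d (j + 1) • innerSL 𝕜 (e (j + 1)) := by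
    refine e.ext_continuousLinearMap fun i => ?_
    simp only [ContinuousLinearMap.comp_apply, hT, coe_innerSL_apply, inner_add_right,
      inner_smul_right, orthonormal_iff_ite.mp e.orthonormal, _root_.add_left_inj, mul_ite, mul_one,
      mul_zero, add_apply, smul_apply, smul_eq_mul]
    split_ifs <;> subst_vars <;> simp_all
  simpa using congr($this x)

theorem isBidiagonalInverse_inner_apply (hT : ∀ i, T (e i) = w i • e (i + 1) + d i • e i)
    (hTA : T * A = 1) (hAT : A * T = 1) :
    IsBidiagonalInverse w d fun j i => ⟪e j, A (e i)⟫_𝕜 where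
  bidiag_mul j i := by
    rw [← inner_basis_succ_apply hT, ← mul_apply_eq_comp, hTA]
    exact orthonormal_iff_ite.mp e.orthonormal _ _
  mul_bidiag j i := by
    have := congr(⟪e j, $hAT (e i)⟫_𝕜)
    simpa [hT, inner_add_right, inner_smul_right, orthonormal_iff_ite.mp e.orthonormal] using this

end HilbertBasis

theorem perturbed_shift_invertible_R_le_one_general
    {X : Type*} [NormedAddCommGroup X] [InnerProductSpace ℂ X]
    (e : HilbertBasis ℤ ℂ X) (w d : ℤ → ℂ)
    (hw : ∀ i : ℤ, w i ≠ 0)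
    (S D : X →L[ℂ] X)
    (hS : ∀ i : ℤ, S (e i) = w i • e (i + 1))
    (hD : ∀ i : ℤ, D (e i) = d i • e i)
    (hT : IsUnit (S + D)) :
    Filter.limsup (fun k : ℕ =>
        (⨆ i : ℤ, (‖(∏ m ∈ Finset.range k, w (i + m)) /
            (∏ m ∈ Finset.range (k + 1), d (i + m))‖₊ : ℝ≥0∞)) ^ (1 / (k : ℝ)))
      Filter.atTop ≤ 1 ∨
    Filter.limsup (fun k : ℕ =>
        (⨆ i : ℤ, (‖(∏ m ∈ Finset.Icc 1 (k - 1), d (i - m)) /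
            (∏ m ∈ Finset.Icc 1 k, w (i - m))‖₊ : ℝ≥0∞)) ^ (1 / (k : ℝ)))
      Filter.atTop ≤ 1 := by
  obtain ⟨u, hu⟩ := hT
  have hTe : ∀ i, (S + D) (e i) = w i • e (i + 1) + d i • e i := fun i => by simp [hS, hD]
  have hα := isBidiagonalInverse_inner_apply hTe (hu ▸ u.mul_inv) (hu ▸ u.inv_mul)
  have hM := e.norm_inner_apply_le (↑u⁻¹ : X →L[ℂ] X)
  set t := d 0 * ⟪e 0, (↑u⁻¹ : X →L[ℂ] X) (e 0)⟫_ℂ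
  obtain ht | ht : 1 / 2 ≤ ‖t‖ ∨ 1 / 2 ≤ ‖1 - t‖ := by
    by_contra! h
    linarith [norm_add_le t (1 - t), show ‖t + (1 - t)‖ = 1 by simp]
  · exact .inl (hα.limsup_forward_le_one hw hM ht)
  · exact .inr (hα.limsup_backward_le_one hw hM ht)

/-- Lemma 6 of the paper: if `T = S + D` (weighted shift plus diagonal, all weights and
diagonal entries nonzero) is invertible as a bounded operator, then at least one of
`R⁺ ≤ 1` or `R⁻ ≤ 1` holds, where
`R⁺ = limsup_k [sup_i |∏_{m=0}^{k-1} w_{i+m} / ∏_{m=0}^{k} d_{i+m}|]^{1/k}` and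
`R⁻ = limsup_k [sup_i |∏_{m=1}^{k-1} d_{i-m} / ∏_{m=1}^{k} w_{i-m}|]^{1/k}`. -/
theorem perturbed_shift_invertible_R_le_one
    {X : Type*} [NormedAddCommGroup X] [InnerProductSpace ℂ X] [CompleteSpace X]
    (e : HilbertBasis ℤ ℂ X) (w d : ℤ → ℂ)
    (hw : ∀ i : ℤ, w i ≠ 0) (hd : ∀ i : ℤ, d i ≠ 0)
    (S D : X →L[ℂ] X)
    (hS : ∀ i : ℤ, S (e i) = w i • e (i + 1))
    (hD : ∀ i : ℤ, D (e i) = d i • e i)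
    (hT : IsUnit (S + D)) :
    Filter.limsup (fun k : ℕ =>
        (⨆ i : ℤ, (‖(∏ m ∈ Finset.range k, w (i + m)) /
            (∏ m ∈ Finset.range (k + 1), d (i + m))‖₊ : ℝ≥0∞)) ^ (1 / (k : ℝ)))
      Filter.atTop ≤ 1 ∨
    Filter.limsup (fun k : ℕ =>
        (⨆ i : ℤ, (‖(∏ m ∈ Finset.Icc 1 (k - 1), d (i - m)) /
            (∏ m ∈ Finset.Icc 1 k, w (i - m))‖₊ : ℝ≥0∞)) ^ (1 / (k : ℝ)))
      Filter.atTop ≤ 1 :=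
  perturbed_shift_invertible_R_le_one_general e w d hw S D hS hD hT
end

section
/- If S is an invertible bounded weighted shift operator on X, then σ(S) = { λ ∈ ℂ : 1/r(S⁻¹) ≤ |λ| ≤ r(S) }, where r denotes the spectral radius; i.e. the spectrum of S is the closed annulus with inner radius 1/r(S⁻¹) and outer radius r(S). -/
/-!
Conjugating `S` by the diagonal unitary `U_u : e k ↦ u ^ k • e k` (`‖u‖ = 1`) gives `u • S`, so the
spectrum of `S` is invariant under rotations. Suppose a circle `‖z‖ = R` misses `σ(S)`. The contour
integral `Q = ∮ (z - S)⁻¹ dz` then commutes with `S`, and with every `U_u` because the substitution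
`z ↦ u z` maps the circle onto itself; commuting with the `U_u`
makes `Q` diagonal, and commuting with a shift whose weights do not vanish makes its diagonal
constant, so `Q = γ • 1`. For `μ` off the circle, `B = ∮ (z - μ)⁻¹ (z - S)⁻¹ dz` satisfies
`B (S - μ) = (γ - ∮ (z - μ)⁻¹ dz) • 1`, and `∮ (z - μ)⁻¹ dz` is `2πi` inside the circle and `0`
outside; hence the whole closed disc or the whole exterior lies in the resolvent set. Since `σ(S)`
contains points of modulus `1 / r(S⁻¹)` and `r(S)`, no circle of intermediate radius misses it.
-/

open Complex Metric Set Real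
open scoped ENNReal InnerProductSpace Pointwise

section CircleIntegral

variable {E F : Type*} [NormedAddCommGroup E] [NormedSpace ℂ E]
  [NormedAddCommGroup F] [NormedSpace ℂ F]

theorem ContinuousLinearMap.circleIntegral_comp_comm [CompleteSpace E] [CompleteSpace F]
    (L : E →L[ℂ] F) {f : ℂ → E} {c : ℂ} {R : ℝ} (hf : CircleIntegrable f c R) :
    (∮ z in C(c, R), L (f z)) = L (∮ z in C(c, R), f z) := by
  simp only [circleIntegral, ← L.intervalIntegral_comp_comm ((circleIntegrable_iff R).1 hf),
    map_smul]

theorem circleIntegral_smul_comp_mul {u : ℂ} (hu : ‖u‖ = 1) (f : ℂ → E) (R : ℝ) :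
    (∮ z in C(0, R), u • f (u * z)) = ∮ z in C(0, R), f z := by
  have hrot : ∀ θ, circleMap 0 R (θ + arg u) = u * circleMap 0 R θ := by
    intro θ
    conv_rhs => rw [← norm_mul_exp_arg_mul_I u, hu]
    simp only [circleMap_zero, ofReal_add, add_mul, Complex.exp_add]
    push_cast
    ring
  set g : ℝ → E := fun θ => deriv (circleMap 0 R) θ • f (circleMap 0 R θ)
  have hg : Function.Periodic g (2 * π) := fun θ => by
    simp only [g, deriv_circleMap, periodic_circleMap 0 R θ]
  calc (∮ z in C(0, R), u • f (u * z)) = ∫ θ in 0..2 * π, g (θ + arg u) := by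
        refine intervalIntegral.integral_congr fun θ _ => ?_
        simp only [g, deriv_circleMap, smul_smul, hrot]
        ring_nf
    _ = ∮ z in C(0, R), f z := by
        rw [intervalIntegral.integral_comp_add_right g, zero_add, add_comm,
          hg.intervalIntegral_add_eq (arg u) 0, zero_add]
        rfl

theorem continuousOn_sub_inv {μ : ℂ} {s : Set ℂ} (hμ : μ ∉ s) :
    ContinuousOn (fun z => (z - μ)⁻¹) s :=
  (continuousOn_id.sub continuousOn_const).inv₀ fun z hz hzμ =>
    hμ ((sub_eq_zero.1 hzμ : z = μ) ▸ hz)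

theorem circleIntegral.integral_sub_inv_of_notMem_closedBall {c μ : ℂ} {R : ℝ} (hR : 0 ≤ R)
    (hμ : μ ∉ closedBall c R) : (∮ z in C(c, R), (z - μ)⁻¹) = 0 :=
  circleIntegral_eq_zero_of_differentiable_on_off_countable hR countable_empty
    (continuousOn_sub_inv hμ) fun _ hz =>
      (differentiableAt_id.sub_const μ).inv
        (sub_ne_zero.2 fun hzμ => hμ (hzμ ▸ ball_subset_closedBall hz.1))

end CircleIntegral

section Resolvent

variable {𝕜 A : Type*} [Field 𝕜] [Ring A] [Algebra 𝕜 A]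

theorem Commute.resolvent_right {a b : A} (h : Commute b a) (z : 𝕜) :
    Commute b (resolvent a z) := by
  have hsub : Commute b (algebraMap 𝕜 A z - a) :=
    (Algebra.commute_algebraMap_right z b).sub_right h
  by_cases hz : IsUnit (algebraMap 𝕜 A z - a)
  · rw [resolvent, Ring.inverse_of_isUnit hz]
    exact (hz.unit_spec ▸ hsub).units_inv_right
  · rw [resolvent, Ring.inverse_non_unit _ hz]
    exact Commute.zero_right b

theorem resolvent_units_conj (u : Aˣ) (a : A) (z : 𝕜) :
    resolvent (↑u * a * ↑u⁻¹) z = ↑u * resolvent a z * ↑u⁻¹ := by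
  have hconj : algebraMap 𝕜 A z - ↑u * a * ↑u⁻¹ = ↑u * (algebraMap 𝕜 A z - a) * ↑u⁻¹ := by
    rw [mul_sub, sub_mul, ← Algebra.commutes z (u : A), Units.mul_inv_cancel_right, mul_assoc]
  rw [resolvent, hconj, Ring.inverse_mul (.inr u⁻¹.isUnit),
    Ring.inverse_mul (.inl u.isUnit), Ring.inverse_unit, Ring.inverse_unit, inv_inv, ← mul_assoc]
  rfl

theorem resolvent_smul {c : 𝕜} (hc : c ≠ 0) (a : A) (z : 𝕜) :
    resolvent (c • a) z = c⁻¹ • resolvent a (c⁻¹ * z) := by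
  have h := spectrum.units_smul_resolvent (r := (Units.mk0 c hc)⁻¹) (s := c⁻¹ * z) (a := a)
  simp only [inv_inv, Units.smul_def, Units.val_inv_eq_inv_val, Units.val_mk0, smul_eq_mul,
    mul_inv_cancel_left₀ hc] at h
  exact h.symm

theorem resolvent_mul_sub_algebraMap {a : A} {z : 𝕜} (hz : z ∈ resolventSet 𝕜 a) (μ : 𝕜) :
    resolvent a z * (a - algebraMap 𝕜 A μ) = (z - μ) • resolvent a z - 1 := by
  have hinv : resolvent a z * (algebraMap 𝕜 A z - a) = 1 :=
    Ring.inverse_mul_cancel _ (spectrum.mem_resolventSet_iff.1 hz)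
  rw [show a - algebraMap 𝕜 A μ = algebraMap 𝕜 A (z - μ) - (algebraMap 𝕜 A z - a) by
      rw [map_sub]; abel, mul_sub, hinv, Algebra.algebraMap_eq_smul_one, mul_smul_one]

end Resolvent

section ContourIntegral

variable {A : Type*} [NormedRing A] [NormedAlgebra ℂ A] [CompleteSpace A]

theorem Commute.circleIntegral_right {a : A} {f : ℂ → A} {c : ℂ} {R : ℝ} (hR : 0 ≤ R)
    (hf : CircleIntegrable f c R) (h : ∀ z ∈ sphere c R, Commute a (f z)) :
    Commute a (∮ z in C(c, R), f z) := by
  have hl := (ContinuousLinearMap.mul ℂ A a).circleIntegral_comp_comm hf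
  have hr := ((ContinuousLinearMap.mul ℂ A).flip a).circleIntegral_comp_comm hf
  simp only [ContinuousLinearMap.mul_apply', ContinuousLinearMap.flip_apply] at hl hr
  rw [Commute, SemiconjBy, ← hl, ← hr]
  exact circleIntegral.integral_congr hR fun z hz => h z hz

theorem continuousOn_resolvent {a : A} {s : Set ℂ} (h : s ⊆ resolventSet ℂ a) :
    ContinuousOn (resolvent a) s := fun _ hz =>
  (spectrum.hasDerivAt_resolvent_const_left (h hz)).continuousAt.continuousWithinAt

theorem circleIntegrable_resolvent {a : A} {c : ℂ} {R : ℝ} (hR : 0 ≤ R)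
    (h : sphere c R ⊆ resolventSet ℂ a) : CircleIntegrable (resolvent a) c R :=
  (continuousOn_resolvent h).circleIntegrable hR

theorem commute_circleIntegral_resolvent_of_units_conj_eq_smul {a : A} {u : Aˣ} {c : ℂ}
    (hc : ‖c‖ = 1) (hu : ↑u * a * ↑u⁻¹ = c • a) {R : ℝ} (hR : 0 ≤ R)
    (h : sphere 0 R ⊆ resolventSet ℂ a) :
    Commute (u : A) (∮ z in C(0, R), resolvent a z) := by
  have hc0 : c ≠ 0 := norm_ne_zero_iff.1 (hc ▸ one_ne_zero)
  have hconj := (ContinuousLinearMap.mulLeftRight ℂ A ↑u ↑u⁻¹).circleIntegral_comp_comm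
    (circleIntegrable_resolvent hR h)
  simp only [ContinuousLinearMap.mulLeftRight_apply, ← resolvent_units_conj, hu,
    resolvent_smul hc0, circleIntegral_smul_comp_mul (by rw [norm_inv, hc, inv_one])] at hconj
  exact (Units.mul_inv_eq_iff_eq_mul u).1 hconj.symm

theorem circleIntegral_sub_inv_smul_resolvent_mul {a : A} {c μ : ℂ} {R : ℝ} (hR : 0 ≤ R)
    (h : sphere c R ⊆ resolventSet ℂ a) (hμ : μ ∉ sphere c R) :
    (∮ z in C(c, R), (z - μ)⁻¹ • resolvent a z) * (a - algebraMap ℂ A μ)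
      = (∮ z in C(c, R), resolvent a z) - (∮ z in C(c, R), (z - μ)⁻¹) • 1 := by
  have hmul := ((ContinuousLinearMap.mul ℂ A).flip (a - algebraMap ℂ A μ)).circleIntegral_comp_comm
    (((continuousOn_sub_inv hμ).smul (continuousOn_resolvent h)).circleIntegrable hR)
  simp only [ContinuousLinearMap.flip_apply, ContinuousLinearMap.mul_apply', Pi.smul_apply']
    at hmul
  have hone : CircleIntegrable (fun z => (z - μ)⁻¹ • (1 : A)) c R :=
    ((continuousOn_sub_inv hμ).smul continuousOn_const).circleIntegrable hR
  rw [← hmul, ← circleIntegral.integral_smul_const,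
    ← circleIntegral.integral_sub (circleIntegrable_resolvent hR h) hone]
  refine circleIntegral.integral_congr hR fun z hz => ?_
  have hzμ : z - μ ≠ 0 := sub_ne_zero.2 fun hzμ => hμ (hzμ ▸ hz)
  rw [smul_mul_assoc, resolvent_mul_sub_algebraMap (h hz), smul_sub, smul_smul,
    inv_mul_cancel₀ hzμ, one_smul]

theorem mem_resolventSet_of_circleIntegral_resolvent_ne {a : A} {c μ γ : ℂ} {R : ℝ} (hR : 0 ≤ R)
    (h : sphere c R ⊆ resolventSet ℂ a)
    (hγ : (∮ z in C(c, R), resolvent a z) = algebraMap ℂ A γ) (hμ : μ ∉ sphere c R)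
    (hne : γ ≠ ∮ z in C(c, R), (z - μ)⁻¹) : μ ∈ resolventSet ℂ a := by
  set B := ∮ z in C(c, R), (z - μ)⁻¹ • resolvent a z
  set δ := γ - ∮ z in C(c, R), (z - μ)⁻¹
  have hδ : δ ≠ 0 := sub_ne_zero.2 hne
  have hBright : B * (a - algebraMap ℂ A μ) = δ • 1 := by
    rw [circleIntegral_sub_inv_smul_resolvent_mul hR h hμ, hγ, Algebra.algebraMap_eq_smul_one,
      ← sub_smul]
  have hcomm : Commute (a - algebraMap ℂ A μ) B :=
    Commute.circleIntegral_right hR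
      (((continuousOn_sub_inv hμ).smul (continuousOn_resolvent h)).circleIntegrable hR)
      fun z _ => (((Commute.refl a).sub_left (Algebra.commute_algebraMap_left μ a)).resolvent_right
        z).smul_right _
  refine spectrum.mem_resolventSet_of_left_right_inverse (b := -(δ⁻¹ • B)) (c := -(δ⁻¹ • B))
    ?_ ?_
  · rw [← neg_sub, neg_mul_neg, mul_smul_comm, hcomm.eq, hBright, smul_smul, inv_mul_cancel₀ hδ,
      one_smul]
  · rw [← neg_sub, neg_mul_neg, smul_mul_assoc, hBright, smul_smul, inv_mul_cancel₀ hδ,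
      one_smul]

theorem closedBall_subset_or_compl_ball_subset_resolventSet {a : A} {c γ : ℂ} {R : ℝ}
    (hR : 0 < R) (h : sphere c R ⊆ resolventSet ℂ a)
    (hγ : (∮ z in C(c, R), resolvent a z) = algebraMap ℂ A γ) :
    closedBall c R ⊆ resolventSet ℂ a ∨ (ball c R)ᶜ ⊆ resolventSet ℂ a := by
  by_cases h2πI : γ = 2 * π * I
  · refine .inr fun μ hμ => ?_
    by_cases hμR : μ ∈ sphere c R
    · exact h hμR
    · refine mem_resolventSet_of_circleIntegral_resolvent_ne hR.le h hγ hμR ?_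
      rw [circleIntegral.integral_sub_inv_of_notMem_closedBall hR.le, h2πI]
      · exact two_pi_I_ne_zero
      · rw [← ball_union_sphere]
        exact fun hμ' => hμ'.elim hμ hμR
  · refine .inl fun μ hμ => ?_
    by_cases hμR : μ ∈ sphere c R
    · exact h hμR
    · refine mem_resolventSet_of_circleIntegral_resolvent_ne hR.le h hγ hμR ?_
      rwa [circleIntegral.integral_sub_inv_of_mem_ball]
      rw [← ball_union_sphere] at hμ
      exact hμ.resolve_right hμR

end ContourIntegral

section Annulus

variable {A : Type*} [NormedRing A] [NormedAlgebra ℂ A]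

theorem spectrum.nnnorm_le_spectralRadius {a : A} {z : ℂ} (hz : z ∈ spectrum ℂ a) :
    (‖z‖₊ : ℝ≥0∞) ≤ spectralRadius ℂ a :=
  le_iSup₂ (f := fun k (_ : k ∈ spectrum ℂ a) => (‖k‖₊ : ℝ≥0∞)) z hz

theorem spectrum.inv_spectralRadius_inv_le_nnnorm (a : Aˣ) {z : ℂ}
    (hz : z ∈ spectrum ℂ (a : A)) : (spectralRadius ℂ (↑a⁻¹ : A))⁻¹ ≤ ‖z‖₊ := by
  have hz0 := spectrum.ne_zero_of_mem_of_unit hz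
  have hle := spectrum.nnnorm_le_spectralRadius
    ((spectrum.inv_mem_iff (r := Units.mk0 z hz0)).1 hz)
  rw [Units.val_inv_eq_inv_val, Units.val_mk0, nnnorm_inv,
    ENNReal.coe_inv (nnnorm_ne_zero_iff.2 hz0)] at hle
  exact ENNReal.inv_le_iff_inv_le.1 hle

variable [CompleteSpace A] [Nontrivial A]

theorem spectrum.exists_nnnorm_eq_inv_spectralRadius_inv (a : Aˣ) :
    ∃ z ∈ spectrum ℂ (a : A), (‖z‖₊ : ℝ≥0∞) = (spectralRadius ℂ (↑a⁻¹ : A))⁻¹ := by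
  obtain ⟨ν, hν, hνr⟩ := spectrum.exists_nnnorm_eq_spectralRadius (↑a⁻¹ : A)
  have hν0 : ν ≠ 0 := spectrum.ne_zero_of_mem_of_unit (a := a⁻¹) hν
  refine ⟨ν⁻¹, ?_, ?_⟩
  · simpa using (spectrum.inv_mem_iff (r := (Units.mk0 ν hν0)⁻¹) (a := a)).2 (by simpa using hν)
  · rw [nnnorm_inv, ENNReal.coe_inv (nnnorm_ne_zero_iff.2 hν0), hνr]

theorem spectrum_eq_annulus_of_rotationInvariant (a : Aˣ)
    (hrot : ∀ z ∈ spectrum ℂ (a : A), ∀ z' : ℂ, ‖z'‖ = ‖z‖ → z' ∈ spectrum ℂ (a : A))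
    (hsep : ∀ R : ℝ, 0 < R → sphere 0 R ⊆ resolventSet ℂ (a : A) →
      closedBall 0 R ⊆ resolventSet ℂ (a : A) ∨ (ball 0 R)ᶜ ⊆ resolventSet ℂ (a : A)) :
    spectrum ℂ (a : A) = {z : ℂ | (spectralRadius ℂ (↑a⁻¹ : A))⁻¹ ≤ (‖z‖₊ : ℝ≥0∞) ∧
      (‖z‖₊ : ℝ≥0∞) ≤ spectralRadius ℂ (a : A)} := by
  refine Subset.antisymm (fun z hz => ⟨spectrum.inv_spectralRadius_inv_le_nnnorm a hz,
    spectrum.nnnorm_le_spectralRadius hz⟩) ?_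
  rintro z ⟨hlow, hup⟩
  obtain ⟨ν, hν, hνr⟩ := spectrum.exists_nnnorm_eq_inv_spectralRadius_inv a
  obtain ⟨ρ, hρ, hρr⟩ := spectrum.exists_nnnorm_eq_spectralRadius (a : A)
  have hνz : ‖ν‖ ≤ ‖z‖ := by rw [← hνr] at hlow; exact_mod_cast hlow
  have hzρ : ‖z‖ ≤ ‖ρ‖ := by rw [← hρr] at hup; exact_mod_cast hup
  have hz0 : 0 < ‖z‖ := (norm_pos_iff.2 (spectrum.ne_zero_of_mem_of_unit hν)).trans_le hνz
  by_contra hz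
  have hsph : sphere 0 ‖z‖ ⊆ resolventSet ℂ (a : A) := fun z' hz' => by
    by_contra hz'σ
    exact hz (hrot z' hz'σ z (mem_sphere_zero_iff_norm.1 hz').symm)
  rcases hsep ‖z‖ hz0 hsph with hin | hout
  · exact hν (hin (mem_closedBall_zero_iff.2 hνz))
  · exact hρ (hout (by simpa using hzρ))

end Annulus

namespace HilbertBasis

variable {ι 𝕜 E : Type*} [RCLike 𝕜] [NormedAddCommGroup E] [InnerProductSpace 𝕜 E]
  (b : HilbertBasis ι 𝕜 E) {c : ι → 𝕜} (hc : ∀ i, ‖c i‖ = 1)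

theorem continuousLinearMap_ext_s18 {F : Type*} [NormedAddCommGroup F] [NormedSpace 𝕜 F]
    {T T' : E →L[𝕜] F} (h : ∀ i, T (b i) = T' (b i)) : T = T' :=
  ContinuousLinearMap.ext_on (Submodule.dense_iff_topologicalClosure_eq_top.2 b.dense_span)
    (by rintro _ ⟨i, rfl⟩; exact h i)

theorem eq_inner_smul_of_inner_eq_zero {x : E} {k : ι} (h : ∀ j ≠ k, ⟪b j, x⟫_𝕜 = 0) :
    x = ⟪b k, x⟫_𝕜 • b k := by
  rw [← b.repr_apply_apply]
  exact (b.hasSum_repr x).unique <|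
    hasSum_single k fun j hj => by rw [b.repr_apply_apply, h j hj, zero_smul]

include hc in
theorem orthonormal_smul_of_norm_eq_one : Orthonormal 𝕜 fun i => c i • b i := by
  classical
  rw [orthonormal_iff_ite]
  intro i j
  rw [inner_smul_left, inner_smul_right, orthonormal_iff_ite.1 b.orthonormal]
  split_ifs with hij
  · subst hij
    rw [mul_one, RCLike.conj_mul, hc, RCLike.ofReal_one, one_pow]
  · rw [mul_zero, mul_zero]

include hc in
theorem dense_span_smul_of_norm_eq_one :
    ⊤ ≤ (Submodule.span 𝕜 (range fun i => c i • b i)).topologicalClosure := by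
  have hspan : Submodule.span 𝕜 (range b) ≤ Submodule.span 𝕜 (range fun i => c i • b i) := by
    refine Submodule.span_le.2 ?_
    rintro _ ⟨i, rfl⟩
    have hci : c i ≠ 0 := norm_ne_zero_iff.1 (by rw [hc]; exact one_ne_zero)
    simpa [smul_smul, inv_mul_cancel₀ hci] using Submodule.smul_mem _ (c i)⁻¹
      (Submodule.subset_span (mem_range_self (f := fun i => c i • b i) i))
  exact b.dense_span.ge.trans (Submodule.topologicalClosure_mono hspan)

variable [CompleteSpace E]

protected noncomputable def smulOfNormEqOne : HilbertBasis ι 𝕜 E :=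
  HilbertBasis.mk (b.orthonormal_smul_of_norm_eq_one hc) (b.dense_span_smul_of_norm_eq_one hc)

theorem coe_smulOfNormEqOne : ⇑(b.smulOfNormEqOne hc) = fun i => c i • b i :=
  HilbertBasis.coe_mk _ _

noncomputable def diagonalIsometry : E ≃ₗᵢ[𝕜] E :=
  b.repr.trans (b.smulOfNormEqOne hc).repr.symm

theorem diagonalIsometry_apply_self (i : ι) : b.diagonalIsometry hc (b i) = c i • b i := by
  classical
  rw [diagonalIsometry, LinearIsometryEquiv.trans_apply, b.repr_self,
    ← (b.smulOfNormEqOne hc).repr_self, LinearIsometryEquiv.symm_apply_apply, coe_smulOfNormEqOne]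

theorem inner_diagonalIsometry (i : ι) (x : E) :
    ⟪b i, b.diagonalIsometry hc x⟫_𝕜 = c i * ⟪b i, x⟫_𝕜 := by
  have h := (b.smulOfNormEqOne hc).repr_apply_apply (b.diagonalIsometry hc x) i
  rw [diagonalIsometry, LinearIsometryEquiv.trans_apply, LinearIsometryEquiv.apply_symm_apply,
    b.repr_apply_apply, coe_smulOfNormEqOne, inner_smul_left] at h
  rw [h, ← mul_assoc, RCLike.mul_conj, hc, RCLike.ofReal_one, one_pow, one_mul]
  rfl

theorem inner_eq_zero_of_commute_diagonalIsometry {T : E →L[𝕜] E}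
    (hT : ∀ x, T (b.diagonalIsometry hc x) = b.diagonalIsometry hc (T x)) {j k : ι}
    (hjk : c j ≠ c k) : ⟪b j, T (b k)⟫_𝕜 = 0 := by
  have h := congrArg (⟪b j, ·⟫_𝕜) (hT (b k))
  simp only [diagonalIsometry_apply_self, map_smul, inner_smul_right, inner_diagonalIsometry] at h
  exact (mul_eq_zero.1 (sub_mul (c j) (c k) _ ▸ sub_eq_zero.2 h.symm)).resolve_left
    (sub_ne_zero.2 hjk)

end HilbertBasis

theorem norm_zpow_of_norm_eq_one {u : ℂ} (hu : ‖u‖ = 1) (k : ℤ) : ‖u ^ k‖ = 1 := by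
  rw [norm_zpow, hu, one_zpow]

theorem exists_norm_eq_one_zpow_ne {j k : ℤ} (hjk : j ≠ k) :
    ∃ u : ℂ, ‖u‖ = 1 ∧ u ^ j ≠ u ^ k := by
  set θ : ℝ := π / (j - k)
  refine ⟨exp (θ * I), norm_exp_ofReal_mul_I θ, fun h => ?_⟩
  have hjk' : (j : ℂ) - k ≠ 0 := sub_ne_zero.2 (by exact_mod_cast hjk)
  have h1 : exp (θ * I) ^ (j - k) = 1 := by
    rw [zpow_sub₀ (Complex.exp_ne_zero _), h, div_self (zpow_ne_zero _ (Complex.exp_ne_zero _))]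
  rw [← exp_int_mul, show ((j - k : ℤ) : ℂ) * (θ * I) = π * I by
    simp only [θ]; push_cast; field_simp, exp_pi_mul_I] at h1
  norm_num at h1

namespace WeightedShift

variable {X : Type*} [NormedAddCommGroup X] [InnerProductSpace ℂ X]
  (e : HilbertBasis ℤ ℂ X) {w : ℤ → ℂ} {S : X →L[ℂ] X} (hS : ∀ i, S (e i) = w i • e (i + 1))

include hS in
theorem weight_ne_zero_of_injective (hinj : Function.Injective S) (i : ℤ) : w i ≠ 0 := by
  intro hwi
  refine e.orthonormal.ne_zero i (hinj ?_)
  rw [hS, hwi, zero_smul, map_zero]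

variable [CompleteSpace X] {u : ℂ} (hu : ‖u‖ = 1)

noncomputable def rotationUnit : (X →L[ℂ] X)ˣ :=
  (e.diagonalIsometry (norm_zpow_of_norm_eq_one hu)).toContinuousLinearEquiv.toUnit

theorem rotationUnit_apply_self (k : ℤ) :
    (rotationUnit e hu : X →L[ℂ] X) (e k) = u ^ k • e k :=
  e.diagonalIsometry_apply_self _ k

include hS in
theorem rotationUnit_conj : ↑(rotationUnit e hu) * S * ↑(rotationUnit e hu)⁻¹ = u • S := by
  rw [Units.mul_inv_eq_iff_eq_mul]
  refine e.continuousLinearMap_ext_s18 fun i => ?_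
  simp only [mul_apply_eq_comp, smul_apply, hS, map_smul, rotationUnit_apply_self, smul_smul,
    zpow_add_one₀ (norm_ne_zero_iff.1 (hu ▸ one_ne_zero) : u ≠ 0)]
  congr 1
  ring

include hS in
theorem mem_spectrum_of_norm_eq {z z' : ℂ} (hz : z ∈ spectrum ℂ S) (h : ‖z'‖ = ‖z‖) :
    z' ∈ spectrum ℂ S := by
  rcases eq_or_ne z 0 with rfl | hz0
  · rwa [norm_eq_zero.1 (h.trans norm_zero)]
  have hu : ‖z' / z‖ = 1 := by rw [norm_div, h, div_self (norm_ne_zero_iff.2 hz0)]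
  have hu0 : z' / z ≠ 0 := norm_ne_zero_iff.1 (hu ▸ one_ne_zero)
  have hσ : spectrum ℂ S = (Units.mk0 _ hu0) • spectrum ℂ S := by
    rw [← spectrum.unit_smul_eq_smul, Units.smul_mk0, ← rotationUnit_conj e hS hu,
      spectrum.units_conjugate]
  rw [hσ]
  exact ⟨z, hz, by simp [div_mul_cancel₀ _ hz0]⟩

theorem apply_self_eq_inner_smul_of_commute_rotationUnit {T : X →L[ℂ] X}
    (hT : ∀ (u : ℂ) (hu : ‖u‖ = 1), Commute (rotationUnit e hu : X →L[ℂ] X) T) (k : ℤ) :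
    T (e k) = ⟪e k, T (e k)⟫_ℂ • e k :=
  e.eq_inner_smul_of_inner_eq_zero fun j hjk => by
    obtain ⟨u, hu, hne⟩ := exists_norm_eq_one_zpow_ne hjk
    exact e.inner_eq_zero_of_commute_diagonalIsometry (norm_zpow_of_norm_eq_one hu)
      (fun x => DFunLike.congr_fun (hT u hu).eq.symm x) hne

include hS in
theorem eq_algebraMap_of_commute (hw : ∀ i, w i ≠ 0) {T : X →L[ℂ] X}
    (hT : ∀ (u : ℂ) (hu : ‖u‖ = 1), Commute (rotationUnit e hu : X →L[ℂ] X) T)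
    (hTS : Commute T S) : T = algebraMap ℂ (X →L[ℂ] X) ⟪e 0, T (e 0)⟫_ℂ := by
  set d : ℤ → ℂ := fun k => ⟪e k, T (e k)⟫_ℂ
  have hdiag := apply_self_eq_inner_smul_of_commute_rotationUnit e hT
  have hd : Function.Periodic d 1 := fun k => by
    have h := DFunLike.congr_fun hTS.eq (e k)
    rw [mul_apply_eq_comp, mul_apply_eq_comp, hS, map_smul, hdiag (k + 1), hdiag k, map_smul, hS,
      smul_smul, smul_smul] at h
    exact mul_left_cancel₀ (hw k) ((smul_left_injective ℂ (e.orthonormal.ne_zero (k + 1)) h).trans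
      (mul_comm _ _))
  refine e.continuousLinearMap_ext_s18 fun k => ?_
  rw [hdiag k, Algebra.algebraMap_eq_smul_one, smul_apply, one_apply_eq_self]
  simpa using congrArg (· • e k) (hd.int_mul_eq k)

include hS in
theorem exists_circleIntegral_resolvent_eq_algebraMap (hw : ∀ i, w i ≠ 0) {R : ℝ} (hR : 0 ≤ R)
    (h : sphere 0 R ⊆ resolventSet ℂ S) :
    ∃ γ : ℂ, (∮ z in C(0, R), resolvent S z) = algebraMap ℂ (X →L[ℂ] X) γ :=
  ⟨_, eq_algebraMap_of_commute e hS hw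
    (fun _ hu => commute_circleIntegral_resolvent_of_units_conj_eq_smul hu
      (rotationUnit_conj e hS hu) hR h)
    (Commute.circleIntegral_right hR (circleIntegrable_resolvent hR h)
      fun z _ => (Commute.refl S).resolvent_right z).symm⟩

end WeightedShift

/-- If `S` is an invertible bounded weighted shift operator, then its spectrum is the
closed annulus `{λ : 1/r(S⁻¹) ≤ |λ| ≤ r(S)}`, where `r` denotes the spectral radius. -/
theorem spectrum_invertible_weighted_shift_annulus
    {X : Type*} [NormedAddCommGroup X] [InnerProductSpace ℂ X] [CompleteSpace X]
    (e : HilbertBasis ℤ ℂ X) (w : ℤ → ℂ)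
    (S Sinv : X →L[ℂ] X) (hS : ∀ i : ℤ, S (e i) = w i • e (i + 1))
    (h1 : S ∘L Sinv = 1) (h2 : Sinv ∘L S = 1) :
    spectrum ℂ S = {z : ℂ |
      (spectralRadius ℂ Sinv)⁻¹ ≤ (‖z‖₊ : ℝ≥0∞) ∧
      (‖z‖₊ : ℝ≥0∞) ≤ spectralRadius ℂ S} := by
  have : Nontrivial X := ⟨e 0, 0, e.orthonormal.ne_zero 0⟩
  have hinj : Function.Injective S :=
    Function.LeftInverse.injective (g := Sinv) fun x => DFunLike.congr_fun h2 x
  have hw := WeightedShift.weight_ne_zero_of_injective e hS hinj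
  refine spectrum_eq_annulus_of_rotationInvariant ⟨S, Sinv, h1, h2⟩
    (fun z hz z' h => WeightedShift.mem_spectrum_of_norm_eq e hS hz h) fun R hR h => ?_
  obtain ⟨γ, hγ⟩ := WeightedShift.exists_circleIntegral_resolvent_eq_algebraMap e hS hw hR.le h
  exact closedBall_subset_or_compl_ball_subset_resolventSet hR h hγ
end
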